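/- For every θ > 0, the sequence (I_n^{(θ)} − E[I_n^{(θ)}])/(θ + n − 1), indexed by n ≥ 1, is a zero-mean martingale with respect to the natural filtration generated by the growth of the Hoppe tree; equivalently, Z_n := I_n^{(θ)}/(θ+n−1) − Σ_{i=1}^{n−1} 1/(θ+i) satisfies E[Z_n | F_{n−1}] = Z_{n−1} almost surely for all n ≥ 2 and E[Z_n] = 0 for all n ≥ 1, where F_{n−1} is the σ-field generated by the parent choices of nodes 2, …, n−1. -/

import Mathlib

/-! Node `m + 2` attaches to each non-root node `j ≤ m + 1` with probability `1/(θ+m)`, and to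
the root, of depth `0`, with the remaining probability; attaching it to `j` adds `D_j + 1` to the
path length. As this choice is independent of the tree built so far,
`E[I_{m+2} | F_m] = I_{m+1} + 1 + I_{m+1}/(θ+m)`, i.e.
`E[I_{m+2}/(θ+m+1) | F_m] = I_{m+1}/(θ+m) + 1/(θ+m+1)`, which is the martingale property.
Since `Z_1 = 0`, the tower property then gives `E[Z_n] = 0`. -/

open MeasureTheory ProbabilityTheory Real Filter Topology

noncomputable section

/-- Depth of node `i` in the Hoppe tree grown from the parent choices `U`:
`U k ω` is the parent of node `k + 2` (a node in `{1, …, k + 1}`, almost surely);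
node `1` is the root. The `min` clipping is irrelevant almost surely. -/
def hoppeDepth {Ω : Type*} (U : ℕ → Ω → ℕ) (ω : Ω) : ℕ → ℕ
  | 0 => 0
  | 1 => 0
  | n + 2 => hoppeDepth U ω (min (U n ω) (n + 1)) + 1
  decreasing_by omega

/-- The parent choices of a Hoppe tree with parameter `θ`: `U k` is the (random) parent
of node `k + 2`, the choices being independent, node `k + 2` choosing its parent among
nodes `1, …, k + 1`, namely the root `1` with probability `θ / (θ + k)` and each other
node with probability `1 / (θ + k)`. -/
structure IsHoppeParents {Ω : Type*} [MeasurableSpace Ω] (θ : ℝ) (μ : Measure Ω)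
    (U : ℕ → Ω → ℕ) : Prop where
  meas : ∀ k, Measurable (U k)
  indep : iIndepFun U μ
  root : ∀ k : ℕ, μ {ω | U k ω = 1} = ENNReal.ofReal (θ / (θ + k))
  nonroot : ∀ k j : ℕ, 2 ≤ j → j ≤ k + 1 → μ {ω | U k ω = j} = ENNReal.ofReal (1 / (θ + k))
  range : ∀ k : ℕ, μ {ω | 1 ≤ U k ω ∧ U k ω ≤ k + 1} = 1

/-- Height of the Hoppe tree with `n` nodes: maximal depth over nodes `1, …, n`. -/
def hoppeHeight {Ω : Type*} (U : ℕ → Ω → ℕ) (ω : Ω) (n : ℕ) : ℕ :=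
  (Finset.Icc 1 n).sup (fun i => hoppeDepth U ω i)

/-- Internal path length of the Hoppe tree with `n` nodes: sum of the depths of
nodes `1, …, n`. -/
def hoppePathLength {Ω : Type*} (U : ℕ → Ω → ℕ) (ω : Ω) (n : ℕ) : ℕ :=
  ∑ i ∈ Finset.Icc 1 n, hoppeDepth U ω i

/-- Number of leaves of the Hoppe tree with `n` nodes: nodes `j ∈ {1, …, n}` that are
the parent of no node `k ∈ {2, …, n}`. -/
def hoppeLeafCount {Ω : Type*} (U : ℕ → Ω → ℕ) (ω : Ω) (n : ℕ) : ℕ :=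
  (@Finset.filter ℕ (fun j => ∀ k ∈ Finset.Icc 2 n, U (k - 2) ω ≠ j)
    (fun _ => Finset.decidableDforallFinset) (Finset.Icc 1 n)).card

section IndexedFamily

variable {Ω ι : Type*} [mι : MeasurableSpace ι]

theorem measurable_eval_index [mΩ : MeasurableSpace Ω] [Countable ι] [MeasurableSingletonClass ι]
    {γ : Type*} [MeasurableSpace γ] {g : ι → Ω → γ} {V : Ω → ι}
    (hg : ∀ i, Measurable (g i)) (hV : Measurable V) : Measurable fun ω => g (V ω) ω :=
  (measurable_from_prod_countable_right (f := fun p : ι × Ω => g p.1 p.2) hg).comp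
    (hV.prodMk measurable_id)

theorem condExp_eval_indep_index [MeasurableSingletonClass ι] {m mΩ : MeasurableSpace Ω}
    {μ : Measure Ω} [IsFiniteMeasure μ] (hm : m ≤ mΩ) {V : Ω → ι} (hV : Measurable V)
    (hind : Indep m (MeasurableSpace.comap V mι) μ) {s : Finset ι}
    (hVs : ∀ᵐ ω ∂μ, V ω ∈ s) {g : ι → Ω → ℝ} (hg : ∀ j ∈ s, StronglyMeasurable[m] (g j))
    (hgi : ∀ j ∈ s, Integrable (g j) μ) :
    μ[fun ω => g (V ω) ω | m] =ᵐ[μ] fun ω => ∑ j ∈ s, μ.real {ω | V ω = j} * g j ω := by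
  classical
  have hA : ∀ j, MeasurableSet {ω | V ω = j} := fun j => hV (measurableSet_singleton j)
  have hdecomp : (fun ω => g (V ω) ω) =ᵐ[μ] ∑ j ∈ s, g j * {ω | V ω = j}.indicator 1 := by
    filter_upwards [hVs] with ω hω
    simp [Finset.sum_apply, Set.indicator_apply, hω]
  have hint : ∀ j ∈ s, Integrable (g j * {ω | V ω = j}.indicator 1) μ := by
    intro j hj
    have : g j * {ω | V ω = j}.indicator 1 = {ω | V ω = j}.indicator (g j) := by
      ext ω; simp [Set.indicator_apply]
    exact this ▸ (hgi j hj).indicator (hA j)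
  have hterm : ∀ j ∈ s, μ[g j * {ω | V ω = j}.indicator 1 | m]
      =ᵐ[μ] fun ω => μ.real {ω | V ω = j} * g j ω := by
    intro j hj
    have hind_j : μ[{ω | V ω = j}.indicator 1 | m] =ᵐ[μ] fun _ => μ.real {ω | V ω = j} := by
      refine (condExp_indep_eq (hV.comap_le) hm ?_ hind.symm).trans ?_
      · exact stronglyMeasurable_const.indicator ⟨{j}, measurableSet_singleton j, rfl⟩
      · simp [integral_indicator_one (hA j)]
    refine (condExp_mul_of_stronglyMeasurable_left (hg j hj) (hint j hj)
      ((integrable_const 1).indicator (hA j))).trans ?_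
    filter_upwards [hind_j] with ω hω
    simp [hω, mul_comm]
  refine (condExp_congr_ae hdecomp).trans ?_
  refine (condExp_finsetSum hint m).trans ?_
  filter_upwards [eventuallyEq_sum hterm] with ω hω
  simpa [Finset.sum_apply] using hω

end IndexedFamily

section Combinatorics

variable {Ω : Type*} (U : ℕ → Ω → ℕ) (ω : Ω)

@[simp]
theorem hoppeDepth_one : hoppeDepth U ω 1 = 0 := by
  simp [hoppeDepth]

theorem hoppeDepth_add_two (n : ℕ) :
    hoppeDepth U ω (n + 2) = hoppeDepth U ω (min (U n ω) (n + 1)) + 1 := by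
  rw [hoppeDepth]

theorem hoppeDepth_le (i : ℕ) : hoppeDepth U ω i ≤ i := by
  induction i using Nat.strong_induction_on with
  | _ i ih =>
    match i with
    | 0 => simp [hoppeDepth]
    | 1 => simp
    | n + 2 =>
      have := ih (min (U n ω) (n + 1)) (by omega)
      rw [hoppeDepth_add_two]
      omega

variable {U ω} in
theorem hoppePathLength_add_two {m : ℕ} (h : U m ω ≤ m + 1) :
    hoppePathLength U ω (m + 2)
      = hoppePathLength U ω (m + 1) + hoppeDepth U ω (U m ω) + 1 := by
  rw [hoppePathLength, Finset.sum_Icc_succ_top (by omega), hoppeDepth_add_two,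
    min_eq_left h, hoppePathLength, add_assoc]

end Combinatorics

section Measurability

variable {Ω : Type*} (U : ℕ → Ω → ℕ)

/-- The information in the tree on nodes `1, …, m + 1`. -/
abbrev parentSigma (m : ℕ) : MeasurableSpace Ω :=
  ⨆ k ∈ Finset.range m, MeasurableSpace.comap (U k) ⊤

variable {U}

theorem parentSigma_measurable_parent {k m : ℕ} (h : k < m) : Measurable[parentSigma U m] (U k) :=
  (comap_measurable (U k)).mono
    (le_iSup₂ (f := fun k (_ : k ∈ Finset.range m) => MeasurableSpace.comap (U k) ⊤) k
      (Finset.mem_range.mpr h)) le_rfl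

theorem parentSigma_le [mΩ : MeasurableSpace Ω] (hU : ∀ k, Measurable (U k)) (m : ℕ) :
    parentSigma U m ≤ mΩ :=
  iSup₂_le fun k _ => (hU k).comap_le

theorem parentSigma_measurable_hoppeDepth {m i : ℕ} (hi : i ≤ m + 1) :
    Measurable[parentSigma U m] fun ω => hoppeDepth U ω i := by
  induction i using Nat.strong_induction_on with
  | _ i ih =>
    match i with
    | 0 => simp only [hoppeDepth]; exact measurable_const
    | 1 => simp only [hoppeDepth_one]; exact measurable_const
    | n + 2 =>
      simp only [hoppeDepth_add_two]
      refine Measurable.add_const ?_ 1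
      exact measurable_eval_index (mΩ := parentSigma U m)
        (g := fun v ω => hoppeDepth U ω (min v (n + 1)))
        (fun _ => ih _ (by omega) (by omega)) (parentSigma_measurable_parent (by omega))

theorem parentSigma_measurable_hoppePathLength {m n : ℕ} (hn : n ≤ m + 1) :
    Measurable[parentSigma U m] fun ω => hoppePathLength U ω n :=
  Finset.measurable_sum _ fun _ hi =>
    parentSigma_measurable_hoppeDepth ((Finset.mem_Icc.mp hi).2.trans hn)

theorem measurable_hoppeDepth [MeasurableSpace Ω] (hU : ∀ k, Measurable (U k)) (i : ℕ) :
    Measurable fun ω => hoppeDepth U ω i :=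
  (parentSigma_measurable_hoppeDepth (m := i) (by omega)).mono (parentSigma_le hU i) le_rfl

theorem integrable_hoppeDepth [MeasurableSpace Ω] {μ : Measure Ω} [IsFiniteMeasure μ]
    (hU : ∀ k, Measurable (U k)) (i : ℕ) :
    Integrable (fun ω => (hoppeDepth U ω i : ℝ)) μ :=
  .of_bound (measurable_from_nat.comp (measurable_hoppeDepth hU i)).aestronglyMeasurable i
    (.of_forall fun ω => by simpa using hoppeDepth_le U ω i)

theorem integrable_hoppePathLength [MeasurableSpace Ω] {μ : Measure Ω} [IsFiniteMeasure μ]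
    (hU : ∀ k, Measurable (U k)) (n : ℕ) :
    Integrable (fun ω => (hoppePathLength U ω n : ℝ)) μ := by
  simp only [hoppePathLength, Nat.cast_sum]
  exact integrable_finsetSum _ fun i _ => integrable_hoppeDepth hU i

theorem indep_parentSigma_comap [MeasurableSpace Ω] {μ : Measure Ω}
    (hU : ∀ k, Measurable (U k)) (hindep : iIndepFun U μ) (m : ℕ) :
    Indep (parentSigma U m) (MeasurableSpace.comap (U m) ⊤) μ := by
  have h := indep_of_indep_of_le_right
    (indep_biSup_compl (fun k => (hU k).comap_le) hindep {k | k < m})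
    (le_iSup₂ (f := fun k (_ : k ∈ {k : ℕ | k < m}ᶜ) => MeasurableSpace.comap (U k) ⊤) m
      (by simp))
  simp only [Set.mem_ofPred_eq] at h
  simp only [parentSigma, Finset.mem_range]
  exact h

end Measurability

def normalizedPathLength {Ω : Type*} (θ : ℝ) (U : ℕ → Ω → ℕ) (n : ℕ) (ω : Ω) : ℝ :=
  (hoppePathLength U ω n : ℝ) / (θ + (n : ℝ) - 1) - ∑ i ∈ Finset.Icc 1 (n - 1), 1 / (θ + i)

theorem normalizedPathLength_succ {Ω : Type*} (θ : ℝ) (U : ℕ → Ω → ℕ) (n : ℕ) (ω : Ω) :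
    normalizedPathLength θ U (n + 1) ω
      = hoppePathLength U ω (n + 1) / (θ + n) - ∑ i ∈ Finset.Icc 1 n, 1 / (θ + i) := by
  simp only [normalizedPathLength, Nat.cast_add, Nat.cast_one, add_sub_cancel_right,
    Nat.add_sub_cancel, ← add_assoc]

namespace IsHoppeParents

variable {Ω : Type*} [MeasurableSpace Ω] {θ : ℝ} {μ : Measure Ω} [IsProbabilityMeasure μ]
  {U : ℕ → Ω → ℕ}

theorem ae_mem_Icc (hU : IsHoppeParents θ μ U) (m : ℕ) :
    ∀ᵐ ω ∂μ, U m ω ∈ Finset.Icc 1 (m + 1) := by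
  have hs : MeasurableSet {ω | 1 ≤ U m ω ∧ U m ω ≤ m + 1} :=
    hU.meas m (t := {x | 1 ≤ x ∧ x ≤ m + 1}) trivial
  simpa only [Finset.mem_Icc, Set.mem_ofPred_eq]
    using ae_iff.mpr ((prob_compl_eq_zero_iff hs).mpr (hU.range m))

theorem condExp_hoppeDepth_parent (hU : IsHoppeParents θ μ U) (hθ : 0 < θ) (m : ℕ) :
    μ[fun ω => (hoppeDepth U ω (U m ω) : ℝ) | parentSigma U m]
      =ᵐ[μ] fun ω => (hoppePathLength U ω (m + 1) : ℝ) / (θ + m) := by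
  have hind := indep_parentSigma_comap hU.meas hU.indep m
  refine (condExp_eval_indep_index (parentSigma_le hU.meas m) (hU.meas m) hind
    (hU.ae_mem_Icc m) (g := fun j ω => (hoppeDepth U ω j : ℝ))
    (fun j hj => (measurable_from_nat.comp
      (parentSigma_measurable_hoppeDepth (Finset.mem_Icc.mp hj).2)).stronglyMeasurable)
    (fun j _ => integrable_hoppeDepth hU.meas j)).trans (.of_forall fun ω => ?_)
  simp only [hoppePathLength, Nat.cast_sum, Finset.sum_div]
  refine Finset.sum_congr rfl fun j hj => ?_
  obtain ⟨hj1, hjm⟩ := Finset.mem_Icc.mp hj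
  obtain rfl | hj2 : j = 1 ∨ 2 ≤ j := by omega
  · simp
  · rw [measureReal_def, hU.nonroot m j hj2 hjm, ENNReal.toReal_ofReal (by positivity)]
    ring

theorem condExp_hoppePathLength (hU : IsHoppeParents θ μ U) (hθ : 0 < θ) (m : ℕ) :
    μ[fun ω => (hoppePathLength U ω (m + 2) : ℝ) | parentSigma U m]
      =ᵐ[μ] fun ω => (θ + m + 1) / (θ + m) * hoppePathLength U ω (m + 1) + 1 := by
  have hle := parentSigma_le hU.meas m
  have hI := integrable_hoppePathLength (μ := μ) hU.meas (m + 1)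
  have hD : Integrable (fun ω => (hoppeDepth U ω (U m ω) : ℝ)) μ := by
    refine .of_bound (C := m + 1) (measurable_eval_index (fun j => measurable_from_nat.comp
      (measurable_hoppeDepth hU.meas j)) (hU.meas m)).aestronglyMeasurable ?_
    filter_upwards [hU.ae_mem_Icc m] with ω hω
    simpa using (Nat.cast_le (α := ℝ)).mpr
      ((hoppeDepth_le U ω _).trans (Finset.mem_Icc.mp hω).2)
  have hsplit : (fun ω => (hoppePathLength U ω (m + 2) : ℝ)) =ᵐ[μ]
      (fun ω => (hoppePathLength U ω (m + 1) : ℝ) + 1)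
        + fun ω => (hoppeDepth U ω (U m ω) : ℝ) := by
    filter_upwards [hU.ae_mem_Icc m] with ω hω
    rw [Pi.add_apply, hoppePathLength_add_two (Finset.mem_Icc.mp hω).2]
    push_cast
    ring
  have hIm : StronglyMeasurable[parentSigma U m] fun ω => (hoppePathLength U ω (m + 1) : ℝ) :=
    (measurable_from_nat.comp (parentSigma_measurable_hoppePathLength le_rfl)).stronglyMeasurable
  refine (condExp_congr_ae hsplit).trans ?_
  refine (condExp_add (hI.add (integrable_const 1)) hD _).trans ?_
  rw [condExp_of_stronglyMeasurable hle (hIm.add stronglyMeasurable_const)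
    (hI.add (integrable_const 1))]
  filter_upwards [hU.condExp_hoppeDepth_parent hθ m] with ω hω
  simp only [Pi.add_apply, hω]
  field_simp
  ring

theorem condExp_normalizedPathLength (hU : IsHoppeParents θ μ U) (hθ : 0 < θ) (m : ℕ) :
    μ[normalizedPathLength θ U (m + 2) | parentSigma U m]
      =ᵐ[μ] normalizedPathLength θ U (m + 1) := by
  have hle := parentSigma_le hU.meas m
  have hZ : normalizedPathLength θ U (m + 2)
      = (θ + m + 1)⁻¹ • (fun ω => (hoppePathLength U ω (m + 2) : ℝ))
        - fun _ => ∑ i ∈ Finset.Icc 1 (m + 1), 1 / (θ + i) := by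
    ext ω
    rw [normalizedPathLength_succ, Pi.sub_apply, Pi.smul_apply, smul_eq_mul]
    push_cast
    ring
  rw [hZ]
  refine (condExp_sub ((integrable_hoppePathLength hU.meas _).smul _)
    (integrable_const _) _).trans ?_
  rw [condExp_const hle]
  filter_upwards [condExp_smul (m := parentSigma U m) (μ := μ) (θ + m + 1)⁻¹
    (fun ω => (hoppePathLength U ω (m + 2) : ℝ)), hU.condExp_hoppePathLength hθ m] with ω h1 h2
  have hθm : θ + m ≠ 0 := by positivity
  have hθm1 : θ + m + 1 ≠ 0 := by positivity
  rw [Pi.sub_apply, h1, Pi.smul_apply, h2, smul_eq_mul, normalizedPathLength_succ,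
    Finset.sum_Icc_succ_top (by omega)]
  push_cast
  field_simp
  ring

theorem integral_normalizedPathLength (hU : IsHoppeParents θ μ U) (hθ : 0 < θ) {n : ℕ}
    (hn : 1 ≤ n) : ∫ ω, normalizedPathLength θ U n ω ∂μ = 0 := by
  induction n, hn using Nat.le_induction with
  | base => simp [normalizedPathLength, hoppePathLength]
  | succ n hn ih =>
    obtain ⟨m, rfl⟩ : ∃ m, n = m + 1 := ⟨n - 1, by omega⟩
    rw [← integral_condExp (parentSigma_le hU.meas m),
      integral_congr_ae (hU.condExp_normalizedPathLength hθ m), ih]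

end IsHoppeParents

/-- The normalized internal path length
`Z_n = I_n/(θ+n-1) - ∑_{i=1}^{n-1} 1/(θ+i)` of a Hoppe tree is a zero-mean martingale:
`E[Z_n] = 0` for all `n ≥ 1` and `E[Z_n | F_{n-1}] = Z_{n-1}` a.s. for all `n ≥ 2`,
where `F_{n-1}` is the σ-field generated by the parent choices of nodes `2, …, n-1`
(that is, by `U 0, …, U (n-3)`). -/
theorem hoppe_path_length_martingale
    {Ω : Type*} [MeasurableSpace Ω]
    (θ : ℝ) (hθ : 0 < θ)
    (μ : Measure Ω) [IsProbabilityMeasure μ] (U : ℕ → Ω → ℕ) (hU : IsHoppeParents θ μ U) :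
    (∀ n : ℕ, 1 ≤ n →
      ∫ ω, ((hoppePathLength U ω n : ℝ) / (θ + (n : ℝ) - 1)
        - ∑ i ∈ Finset.Icc 1 (n - 1), 1 / (θ + i)) ∂μ = 0)
    ∧ ∀ n : ℕ, 2 ≤ n →
      μ[fun ω => (hoppePathLength U ω n : ℝ) / (θ + (n : ℝ) - 1)
          - ∑ i ∈ Finset.Icc 1 (n - 1), 1 / (θ + i)
        | ⨆ k ∈ Finset.range (n - 2), MeasurableSpace.comap (U k) ⊤]
      =ᵐ[μ] fun ω => (hoppePathLength U ω (n - 1) : ℝ) / (θ + ((n : ℝ) - 1) - 1)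
          - ∑ i ∈ Finset.Icc 1 (n - 1 - 1), 1 / (θ + i) := by
  refine ⟨fun n hn => hU.integral_normalizedPathLength hθ hn, fun n hn => ?_⟩
  obtain ⟨m, rfl⟩ : ∃ m, n = m + 2 := ⟨n - 2, by omega⟩
  have hZ : ∀ ω, (hoppePathLength U ω (m + 2 - 1) : ℝ) / (θ + (((m + 2 : ℕ) : ℝ) - 1) - 1)
      - ∑ i ∈ Finset.Icc 1 (m + 2 - 1 - 1), 1 / (θ + i)
      = normalizedPathLength θ U (m + 1) ω := by
    intro ω
    rw [normalizedPathLength_succ]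
    push_cast
    ring_nf
  simp only [hZ]
  exact hU.condExp_normalizedPathLength hθ m

end
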